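/- Let A be a nonzero commutative ring and let F ∈ A[x] be a monic polynomial such that for every maximal ideal m of A the image of F in (A/m)[x] is separable. Then B := A[x]/(F) is a finite étale A-algebra: B is a finite A-module (free of rank deg F), and the A-algebra B is étale, i.e. flat, of finite presentation, and formally étale (equivalently, formally unramified and formally smooth). -/

import Mathlib

/-!
`A[x]/(F)` is free on `1, x, …, x^(deg F - 1)`, hence finite, flat and integral over `A`.
Every maximal ideal `n` of it lies over a maximal ideal `m` of `A`, and the image of `x` in the
field `A[x]/(F) ⧸ n` is a root of the separable polynomial `F mod m`, so `F'(x) ∉ n`. Thus `F'(x)`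
is a unit, i.e. `F' p + F q = 1` for some `p, q`, and `A[x]/(F)` is the standard étale algebra
of the pair `(F, 1)`.
-/

open Polynomial

namespace AdjoinRoot

variable {A : Type*} [CommRing A] {F : A[X]}

lemma isUnit_mk_derivative_of_separable_map (hF : F.Monic)
    (hsep : ∀ m : Ideal A, m.IsMaximal → (F.map (Ideal.Quotient.mk m)).Separable) :
    IsUnit (mk F (derivative F)) := by
  have := hF.finite_adjoinRoot
  by_contra h
  obtain ⟨n, hn, hmem⟩ := exists_max_ideal_of_mem_nonunits h
  let m := n.comap (algebraMap A (AdjoinRoot F))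
  have hm : m.IsMaximal := Ideal.isMaximal_comap_of_isIntegral_of_isMaximal n
  let φ : A ⧸ m →+* AdjoinRoot F ⧸ n := Ideal.quotientMap n (algebraMap _ _) le_rfl
  have hφ : φ.comp (Ideal.Quotient.mk m) = (Ideal.Quotient.mk n).comp (of F) := rfl
  have hroot : (F.map (Ideal.Quotient.mk m)).eval₂ φ (Ideal.Quotient.mk n (root F)) = 0 := by
    rw [eval₂_map, hφ, ← hom_eval₂, eval₂_root, map_zero]
  apply (hsep m hm).eval₂_derivative_ne_zero φ hroot
  rw [derivative_map, eval₂_map, hφ, ← hom_eval₂, ← algebraMap_eq, ← aeval_def, aeval_eq]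
  exact Ideal.Quotient.eq_zero_iff_mem.mpr hmem

lemma etale_of_isUnit_mk_derivative (hF : F.Monic) (h : IsUnit (mk F (derivative F))) :
    Algebra.Etale A (AdjoinRoot F) := by
  obtain ⟨u, hu⟩ := h.exists_right_inv
  obtain ⟨p, rfl⟩ := mk_surjective u
  obtain ⟨q, hq⟩ : F ∣ derivative F * p - 1 := mk_eq_mk.mp (by rwa [map_mul, map_one])
  let P : StandardEtalePair A := ⟨F, hF, 1, p, -q, 0, by linear_combination hq⟩
  exact .of_equiv <| P.equivAwayAdjoinRoot.trans
    ((IsLocalization.atUnit (AdjoinRoot F) _ (mk F 1) (by simp)).symm.restrictScalars A)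

end AdjoinRoot

/-- **Fibrewise separable monic polynomials give finite étale algebras.**
Let `A` be a nonzero commutative ring and `F ∈ A[x]` a monic polynomial whose reduction
modulo every maximal ideal of `A` is separable. Then `B := A[x]/(F)` is a finite étale
`A`-algebra: it is a finite `A`-module, free of rank `deg F`, and it is flat, of finite
presentation and formally étale over `A`. -/
theorem adjoinRoot_finite_etale_of_separable_fibres
    {A : Type*} [CommRing A] [Nontrivial A] (F : Polynomial A) (hF : F.Monic)
    (hsep : ∀ m : Ideal A, m.IsMaximal → (F.map (Ideal.Quotient.mk m)).Separable) :
    Module.Finite A (AdjoinRoot F) ∧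
    Module.Free A (AdjoinRoot F) ∧
    Module.finrank A (AdjoinRoot F) = F.natDegree ∧
    Module.Flat A (AdjoinRoot F) ∧
    Algebra.FinitePresentation A (AdjoinRoot F) ∧
    Algebra.FormallyEtale A (AdjoinRoot F) := by
  have := hF.free_adjoinRoot
  have := AdjoinRoot.etale_of_isUnit_mk_derivative hF
    (AdjoinRoot.isUnit_mk_derivative_of_separable_map hF hsep)
  exact ⟨hF.finite_adjoinRoot, inferInstance, (AdjoinRoot.powerBasis' hF).finrank,
    inferInstance, inferInstance, inferInstance⟩
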